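/- A Hermitian twisted cartesian product (g1 ⋈ g2, J, k) is Kähler (i.e., its fundamental form ω(u,v) = k(Ju,v) satisfies dω = 0) if and only if (g1, J1, k1) and (g2, J2, k2) are both Kähler and both representations are skew-adjoint: ρ1(x)* = −ρ1(x) for all x ∈ g1 (with respect to k2) and ρ2(a)* = −ρ2(a) for all a ∈ g2 (with respect to k1). -/

import Mathlib

open scoped BigOperators

section TCPDefs

variable {V V₁ V₂ W : Type*} [AddCommGroup V] [Module ℝ V]
  [AddCommGroup V₁] [Module ℝ V₁] [AddCommGroup V₂] [Module ℝ V₂]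
  [AddCommGroup W] [Module ℝ W]

/-- Real-bilinearity of a two-argument map. -/
def IsBilinMap (f : V₁ → V₂ → W) : Prop :=
  (∀ x y z, f (x + y) z = f x z + f y z) ∧ (∀ (c : ℝ) x z, f (c • x) z = c • f x z) ∧
  (∀ x y z, f x (y + z) = f x y + f x z) ∧ (∀ (c : ℝ) x z, f x (c • z) = c • f x z)

/-- The Jacobi identity for a bracket. -/
def Jacobi (l : V → V → V) : Prop :=
  ∀ u v w, l (l u v) w + l (l v w) u + l (l w u) v = 0

/-- A (real) Lie bracket: bilinear, antisymmetric, Jacobi. -/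
def IsLieBracket (l : V → V → V) : Prop :=
  IsBilinMap l ∧ (∀ u v, l u v = -l v u) ∧ Jacobi l

/-- D is a derivation of the bracket l. -/
def IsDeriv (l : V → V → V) (D : V → V) : Prop :=
  ∀ u v, D (l u v) = l (D u) v + l u (D v)

/-- Compatibility of the couple (ρ1, ρ2). -/
def Compat (ρ1 : V₁ → V₂ → V₂) (ρ2 : V₂ → V₁ → V₁) : Prop :=
  (∀ (x : V₁) (a b : V₂), ρ1 (ρ2 a x) b = ρ1 (ρ2 b x) a) ∧
  (∀ (x y : V₁) (a : V₂), ρ2 (ρ1 x a) y = ρ2 (ρ1 y a) x)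

/-- The twisted cartesian product bracket on V₁ × V₂. -/
def twBr (l1 : V₁ → V₁ → V₁) (l2 : V₂ → V₂ → V₂)
    (ρ1 : V₁ → V₂ → V₂) (ρ2 : V₂ → V₁ → V₁) (u v : V₁ × V₂) : V₁ × V₂ :=
  (l1 u.1 v.1 + ρ2 u.2 v.1 - ρ2 v.2 u.1, l2 u.2 v.2 + ρ1 u.1 v.2 - ρ1 v.1 u.2)

/-- The product almost complex structure. -/
def prodJ (J1 : V₁ → V₁) (J2 : V₂ → V₂) (u : V₁ × V₂) : V₁ × V₂ := (J1 u.1, J2 u.2)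

/-- The product metric. -/
def prodK (k1 : V₁ → V₁ → ℝ) (k2 : V₂ → V₂ → ℝ) (u v : V₁ × V₂) : ℝ :=
  k1 u.1 v.1 + k2 u.2 v.2

/-- Nijenhuis tensor of J with respect to the bracket l. -/
def nijenhuis (l : V → V → V) (J : V → V) (u v : V) : V :=
  l (J u) (J v) - l u v - J (l (J u) v + l u (J v))

/-- Fundamental 2-form ω(u,v) = k(Ju, v). -/
def fund (k : V → V → ℝ) (J : V → V) (u v : V) : ℝ := k (J u) v

/-- Chevalley–Eilenberg differential of a 2-form. -/
def d2 (l : V → V → V) (ω : V → V → ℝ) (u v w : V) : ℝ :=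
  -ω (l u v) w + ω (l u w) v - ω (l v w) u

/-- Chevalley–Eilenberg differential of a 1-form. -/
def d1 (l : V → V → V) (θ : V → ℝ) (u v : V) : ℝ := -θ (l u v)

/-- Wedge product of a 1-form with a 2-form, evaluated on three vectors. -/
def wedge12 (θ : V → ℝ) (ω : V → V → ℝ) (u v w : V) : ℝ :=
  θ u * ω v w - θ v * ω u w + θ w * ω u v

/-- The Koszul formula characterizing the Levi-Civita product of (g, k). -/
def IsLeviCivita (k : V → V → ℝ) (l : V → V → V) (nab : V → V → V) : Prop :=
  ∀ u v w, 2 * k (nab u v) w = k (l u v) w - k (l v w) u - k (l u w) v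

/-- Codifferential of a 2-form ω relative to a family E (an orthonormal basis)
    and a Levi-Civita product nab:  d*ω(X) = −Σ_i (∇_{E_i}ω)(E_i, X). -/
def codiff {ι : Type*} [Fintype ι] (E : ι → V) (nab : V → V → V)
    (ω : V → V → ℝ) (X : V) : ℝ :=
  -∑ i, (-(ω (nab (E i) (E i)) X) - ω (E i) (nab (E i) X))

/-- Lee form θ = −d*ω ∘ J. -/
def leeForm {ι : Type*} [Fintype ι] (E : ι → V) (nab : V → V → V)
    (k : V → V → ℝ) (J : V → V) (X : V) : ℝ :=
  -codiff E nab (fund k J) (J X)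

/-- A family is orthonormal with respect to k. -/
def Orthonormal' {ι : Type*} [DecidableEq ι] (k : V → V → ℝ) (E : ι → V) : Prop :=
  ∀ i j, k (E i) (E j) = if i = j then 1 else 0

/-- k is an inner product: symmetric, bilinear, positive definite. -/
def IsInner (k : V → V → ℝ) : Prop :=
  IsBilinMap k ∧ (∀ u v, k u v = k v u) ∧ (∀ u, u ≠ 0 → 0 < k u u)

/-- A Hermitian structure on the Lie algebra (V, l). -/
def IsHermitian (l : V → V → V) (J : V → V) (k : V → V → ℝ) : Prop :=
  IsInner k ∧ (∀ u, J (J u) = -u) ∧ (∀ u v, nijenhuis l J u v = 0) ∧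
  (∀ u v, k (J u) (J v) = k u v)

end TCPDefs

/-! Writing `u = (x, a)`, `v = (y, b)`, `w = (z, c)`, the differential of the fundamental form of
the product splits as `dω₁(x, y, z) + dω₂(a, b, c)` plus six cross terms of the form
`±(ω₁(ρ₂(a) y, z) - ω₁(ρ₂(a) z, y))` and their analogues for `ρ₁`; evaluating on vectors with zero
components isolates each piece. As `ρᵢ` commutes with `Jᵢ`, and `Jᵢ` is a `kᵢ`-isometry with
`Jᵢ² = -1`, the vanishing of such a cross term for all arguments is equivalent to `ρᵢ(x)` being
`kᵢ`-skew, i.e. to `ρᵢ(x)* = -ρᵢ(x)`. -/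

section Bilinear

variable {V V₁ V₂ W : Type*} [AddCommGroup V] [Module ℝ V]
  [AddCommGroup V₁] [Module ℝ V₁] [AddCommGroup V₂] [Module ℝ V₂]
  [AddCommGroup W] [Module ℝ W]

namespace IsBilinMap

variable {f : V₁ → V₂ → W}

theorem map_zero_left (hf : IsBilinMap f) (z : V₂) : f 0 z = 0 := by
  simpa using hf.2.1 0 0 z

theorem map_zero_right (hf : IsBilinMap f) (x : V₁) : f x 0 = 0 := by
  simpa using hf.2.2.2 0 x 0

theorem map_neg_left (hf : IsBilinMap f) (x : V₁) (z : V₂) : f (-x) z = -f x z := by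
  simpa using hf.2.1 (-1) x z

theorem map_sub_left (hf : IsBilinMap f) (x y : V₁) (z : V₂) :
    f (x - y) z = f x z - f y z := by
  rw [sub_eq_add_neg, hf.1, hf.map_neg_left, sub_eq_add_neg]

theorem fund {k : V → V → ℝ} (hk : IsBilinMap k) (J : V →ₗ[ℝ] V) :
    IsBilinMap (_root_.fund k J) :=
  ⟨fun x y z => by simp only [_root_.fund, map_add, hk.1],
   fun c x z => by simp only [_root_.fund, map_smul, hk.2.1],
   fun x y z => hk.2.2.1 _ y z, fun c x z => hk.2.2.2 c _ z⟩

end IsBilinMap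

theorem IsInner.eq_zero_of_forall_left {k : V → V → ℝ} (hk : IsInner k) {v : V}
    (hv : ∀ w, k v w = 0) : v = 0 := by
  by_contra hne
  exact (hk.2.2 v hne).ne' (hv v)

theorem IsInner.adjoint_eq_neg_iff {k : V → V → ℝ} (hk : IsInner k) {A As : V → V}
    (hAs : ∀ y z, k (As y) z = k y (A z)) :
    (∀ y, As y = -A y) ↔ ∀ y z, k (A y) z = -k y (A z) := by
  constructor
  · intro h y z
    rw [← hAs, h, hk.1.map_neg_left, neg_neg]
  · intro h y
    rw [← sub_eq_zero]
    refine hk.eq_zero_of_forall_left fun z => ?_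
    rw [hk.1.map_sub_left, hk.1.map_neg_left, hAs, h]
    ring

end Bilinear

section SkewComp

variable {V : Type*} [AddCommGroup V] [Module ℝ V]

/-- For antisymmetric `ω` this is `ω (A y) z + ω y (A z)`: its vanishing says that `A` preserves
`ω` infinitesimally. -/
def skewComp (ω : V → V → ℝ) (A : V → V) (y z : V) : ℝ := ω (A y) z - ω (A z) y

theorem skewComp_fund_eq_zero_iff {k : V → V → ℝ} (hk : IsBilinMap k)
    (hsymm : ∀ u v, k u v = k v u) {J : V → V} (hJJ : ∀ u, J (J u) = -u)
    (hJk : ∀ u v, k (J u) (J v) = k u v) {A : V → V} (hAJ : ∀ u, A (J u) = J (A u)) :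
    (∀ y z, skewComp (fund k J) A y z = 0) ↔ ∀ y z, k (A y) z = -k y (A z) := by
  simp only [skewComp, fund, sub_eq_zero]
  constructor
  · intro h y z
    have h' := h (J y) z
    rw [hAJ, hJJ, hk.map_neg_left, hJk, hsymm (A z)] at h'
    linarith
  · intro h y z
    calc k (J (A y)) z = k (J (J (A y))) (J z) := (hJk _ _).symm
      _ = k y (A (J z)) := by rw [hJJ, hk.map_neg_left, h, neg_neg]
      _ = k (J (A z)) y := by rw [hAJ, hsymm]

end SkewComp

section TwistedProduct

variable {V₁ V₂ : Type*} [AddCommGroup V₁] [Module ℝ V₁] [AddCommGroup V₂] [Module ℝ V₂]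

theorem d2_apply_zero_left {l : V₁ → V₁ → V₁} {ω : V₁ → V₁ → ℝ}
    (hl : IsBilinMap l) (hω : IsBilinMap ω) (v w : V₁) : d2 l ω 0 v w = 0 := by
  simp only [d2, hl.map_zero_left, hω.map_zero_left, hω.map_zero_right]
  ring

theorem d2_apply_zero_right {l : V₁ → V₁ → V₁} {ω : V₁ → V₁ → ℝ}
    (hl : IsBilinMap l) (hω : IsBilinMap ω) (u v : V₁) : d2 l ω u v 0 = 0 := by
  simp only [d2, hl.map_zero_right, hω.map_zero_left, hω.map_zero_right]
  ring

theorem d2_twBr_prodK {l1 : V₁ → V₁ → V₁} {l2 : V₂ → V₂ → V₂}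
    {ω1 : V₁ → V₁ → ℝ} {ω2 : V₂ → V₂ → ℝ} (hω1 : IsBilinMap ω1) (hω2 : IsBilinMap ω2)
    (ρ1 : V₁ → V₂ → V₂) (ρ2 : V₂ → V₁ → V₁) (x y z : V₁) (a b c : V₂) :
    d2 (twBr l1 l2 ρ1 ρ2) (prodK ω1 ω2) (x, a) (y, b) (z, c) =
      d2 l1 ω1 x y z + d2 l2 ω2 a b c
        - skewComp ω1 (ρ2 a) y z + skewComp ω1 (ρ2 b) x z - skewComp ω1 (ρ2 c) x y
        - skewComp ω2 (ρ1 x) b c + skewComp ω2 (ρ1 y) a c - skewComp ω2 (ρ1 z) a b := by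
  simp only [d2, twBr, prodK, skewComp, hω1.1, hω1.map_sub_left, hω2.1, hω2.map_sub_left]
  ring

theorem LinearMap.isBilinMap_apply (ρ : V₁ →ₗ[ℝ] Module.End ℝ V₂) :
    IsBilinMap (fun x a => ρ x a) :=
  ⟨by simp, by simp, by simp, by simp⟩

theorem forall_d2_twBr_eq_zero_iff {l1 : V₁ → V₁ → V₁} {l2 : V₂ → V₂ → V₂}
    {ω1 : V₁ → V₁ → ℝ} {ω2 : V₂ → V₂ → ℝ} {ρ1 : V₁ → V₂ → V₂} {ρ2 : V₂ → V₁ → V₁}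
    (hl1 : IsBilinMap l1) (hl2 : IsBilinMap l2) (hω1 : IsBilinMap ω1) (hω2 : IsBilinMap ω2)
    (hρ1 : IsBilinMap ρ1) (hρ2 : IsBilinMap ρ2) :
    (∀ u v w, d2 (twBr l1 l2 ρ1 ρ2) (prodK ω1 ω2) u v w = 0)
      ↔ (∀ x y z, d2 l1 ω1 x y z = 0) ∧ (∀ a b c, d2 l2 ω2 a b c = 0) ∧
        (∀ x b c, skewComp ω2 (ρ1 x) b c = 0) ∧ (∀ a y z, skewComp ω1 (ρ2 a) y z = 0) := by
  have hd1 := d2_apply_zero_left hl1 hω1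
  have hd2 := d2_apply_zero_left hl2 hω2
  have hd1' := d2_apply_zero_right hl1 hω1
  constructor
  · intro h
    have h' := fun x y z a b c => (d2_twBr_prodK hω1 hω2 ρ1 ρ2 x y z a b c).symm.trans
      (h (x, a) (y, b) (z, c))
    refine ⟨fun x y z => ?_, fun a b c => ?_, fun x b c => ?_, fun a y z => ?_⟩
    on_goal 1 => have := h' x y z 0 0 0
    on_goal 2 => have := h' 0 0 0 a b c
    on_goal 3 => have := h' x 0 0 0 b c
    on_goal 4 => have := h' y z 0 0 0 a
    all_goals
      simp only [hd1, hd2, hd1', skewComp, hω1.map_zero_left, hω1.map_zero_right,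
        hω2.map_zero_left, hω2.map_zero_right, hρ1.map_zero_left, hρ1.map_zero_right,
        hρ2.map_zero_left, hρ2.map_zero_right] at this ⊢
      linarith
  · rintro ⟨h1, h2, hs1, hs2⟩ ⟨x, a⟩ ⟨y, b⟩ ⟨z, c⟩
    simp [d2_twBr_prodK hω1 hω2, h1, h2, hs1, hs2]

end TwistedProduct

theorem kaehler_iff_of_twisted_product_general
    {V₁ V₂ : Type*} [AddCommGroup V₁] [Module ℝ V₁]
    [AddCommGroup V₂] [Module ℝ V₂]
    (l1 : V₁ → V₁ → V₁) (l2 : V₂ → V₂ → V₂)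
    (hl1 : IsLieBracket l1) (hl2 : IsLieBracket l2)
    (J1 : Module.End ℝ V₁) (J2 : Module.End ℝ V₂)
    (k1 : V₁ → V₁ → ℝ) (k2 : V₂ → V₂ → ℝ)
    (hH1 : IsHermitian l1 (⇑J1) k1) (hH2 : IsHermitian l2 (⇑J2) k2)
    (ρ1 : V₁ →ₗ[ℝ] Module.End ℝ V₂) (ρ2 : V₂ →ₗ[ℝ] Module.End ℝ V₁)
    (hcomm1 : ∀ x : V₁, ρ1 x * J2 = J2 * ρ1 x)
    (hcomm2 : ∀ a : V₂, ρ2 a * J1 = J1 * ρ2 a)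
    (ρ1s : V₁ → V₂ → V₂) (hρ1s : ∀ x b c, k2 (ρ1s x b) c = k2 b (ρ1 x c))
    (ρ2s : V₂ → V₁ → V₁) (hρ2s : ∀ a y z, k1 (ρ2s a y) z = k1 y (ρ2 a z)) :
    (∀ u v w : V₁ × V₂,
      d2 (twBr l1 l2 (fun x a => ρ1 x a) (fun a x => ρ2 a x))
        (fund (prodK k1 k2) (prodJ (⇑J1) (⇑J2))) u v w = 0) ↔
      ((∀ x y z : V₁, d2 l1 (fund k1 (⇑J1)) x y z = 0) ∧
       (∀ a b c : V₂, d2 l2 (fund k2 (⇑J2)) a b c = 0) ∧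
       (∀ (x : V₁) (b : V₂), ρ1s x b = -(ρ1 x b)) ∧
       (∀ (a : V₂) (y : V₁), ρ2s a y = -(ρ2 a y))) := by
  obtain ⟨hk1, hJ1J1, -, hJ1k⟩ := hH1
  obtain ⟨hk2, hJ2J2, -, hJ2k⟩ := hH2
  have hskew1 (x : V₁) :
      (∀ b c, skewComp (fund k2 J2) (ρ1 x) b c = 0) ↔ ∀ b, ρ1s x b = -ρ1 x b :=
    (skewComp_fund_eq_zero_iff hk2.1 hk2.2.1 hJ2J2 hJ2k (LinearMap.congr_fun (hcomm1 x))).trans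
      (hk2.adjoint_eq_neg_iff (hρ1s x)).symm
  have hskew2 (a : V₂) :
      (∀ y z, skewComp (fund k1 J1) (ρ2 a) y z = 0) ↔ ∀ y, ρ2s a y = -ρ2 a y :=
    (skewComp_fund_eq_zero_iff hk1.1 hk1.2.1 hJ1J1 hJ1k (LinearMap.congr_fun (hcomm2 a))).trans
      (hk1.adjoint_eq_neg_iff (hρ2s a)).symm
  rw [← forall_congr' hskew1, ← forall_congr' hskew2]
  exact forall_d2_twBr_eq_zero_iff hl1.1 hl2.1 (hk1.1.fund J1) (hk2.1.fund J2)
    ρ1.isBilinMap_apply ρ2.isBilinMap_apply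

/-- a Hermitian twisted cartesian product is Kähler iff both
factors are Kähler and ρ1, ρ2 are skew-adjoint. -/
theorem kaehler_iff_of_twisted_product
    {V₁ V₂ : Type*} [AddCommGroup V₁] [Module ℝ V₁] [FiniteDimensional ℝ V₁]
    [AddCommGroup V₂] [Module ℝ V₂] [FiniteDimensional ℝ V₂]
    (l1 : V₁ → V₁ → V₁) (l2 : V₂ → V₂ → V₂)
    (hl1 : IsLieBracket l1) (hl2 : IsLieBracket l2)
    (J1 : Module.End ℝ V₁) (J2 : Module.End ℝ V₂)
    (k1 : V₁ → V₁ → ℝ) (k2 : V₂ → V₂ → ℝ)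
    (hH1 : IsHermitian l1 (⇑J1) k1) (hH2 : IsHermitian l2 (⇑J2) k2)
    (ρ1 : V₁ →ₗ[ℝ] Module.End ℝ V₂) (ρ2 : V₂ →ₗ[ℝ] Module.End ℝ V₁)
    (hd1 : ∀ x, IsDeriv l2 (ρ1 x)) (hd2 : ∀ a, IsDeriv l1 (ρ2 a))
    (hrep1 : ∀ x y, ρ1 (l1 x y) = ρ1 x * ρ1 y - ρ1 y * ρ1 x)
    (hrep2 : ∀ a b, ρ2 (l2 a b) = ρ2 a * ρ2 b - ρ2 b * ρ2 a)
    (hcompat : Compat (fun x a => ρ1 x a) (fun a x => ρ2 a x))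
    (hcomm1 : ∀ x : V₁, ρ1 x * J2 = J2 * ρ1 x)
    (hcomm2 : ∀ a : V₂, ρ2 a * J1 = J1 * ρ2 a)
    (ρ1s : V₁ → V₂ → V₂) (hρ1s : ∀ x b c, k2 (ρ1s x b) c = k2 b (ρ1 x c))
    (ρ2s : V₂ → V₁ → V₁) (hρ2s : ∀ a y z, k1 (ρ2s a y) z = k1 y (ρ2 a z)) :
    (∀ u v w : V₁ × V₂,
      d2 (twBr l1 l2 (fun x a => ρ1 x a) (fun a x => ρ2 a x))
        (fund (prodK k1 k2) (prodJ (⇑J1) (⇑J2))) u v w = 0) ↔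
      ((∀ x y z : V₁, d2 l1 (fund k1 (⇑J1)) x y z = 0) ∧
       (∀ a b c : V₂, d2 l2 (fund k2 (⇑J2)) a b c = 0) ∧
       (∀ (x : V₁) (b : V₂), ρ1s x b = -(ρ1 x b)) ∧
       (∀ (a : V₂) (y : V₁), ρ2s a y = -(ρ2 a y))) :=
  kaehler_iff_of_twisted_product_general l1 l2 hl1 hl2 J1 J2 k1 k2 hH1 hH2 ρ1 ρ2 hcomm1 hcomm2 ρ1s
    hρ1s ρ2s hρ2s
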